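/- Let Û, Δ ∈ ℝ^{n×r} with ΔᵀÛ = ÛᵀΔ, let U = Û + Δ, and suppose σ_min(Û) ≥ √λ > 0 and ‖Δ‖_F ≤ (1/3)√λ. Suppose the linear map 𝒜 satisfies (2r, δ)-RIP with δ < 1/10. Then with f(U) = (1/(4m))‖𝒜(UUᵀ) − 𝒜(ÛÛᵀ)‖², one has ⟨∇f(U), Δ⟩ ≥ (λ/2)‖Δ‖_F², and consequently ‖Δ‖_F ≤ (2/λ)‖∇f(U)‖_F. -/
import Mathlib


open Matrix

noncomputable def frobInner {p q : ℕ} (A B : Matrix (Fin p) (Fin q) ℝ) : ℝ :=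
  ∑ i, ∑ j, A i j * B i j

noncomputable def frobNorm {p q : ℕ} (A : Matrix (Fin p) (Fin q) ℝ) : ℝ :=
  Real.sqrt (∑ i, ∑ j, (A i j) ^ 2)

section aux
variable {p q s t : ℕ}

lemma fi_comm (A B : Matrix (Fin p) (Fin q) ℝ) : frobInner A B = frobInner B A := by
  simp [frobInner, mul_comm]

lemma fi_add_right (A B C : Matrix (Fin p) (Fin q) ℝ) :
    frobInner A (B + C) = frobInner A B + frobInner A C := by
  simp [frobInner, Matrix.add_apply, mul_add, Finset.sum_add_distrib]

lemma fi_add_left (A B C : Matrix (Fin p) (Fin q) ℝ) :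
    frobInner (A + B) C = frobInner A C + frobInner B C := by
  rw [fi_comm, fi_add_right, fi_comm C A, fi_comm C B]

lemma fi_smul_left (c : ℝ) (A B : Matrix (Fin p) (Fin q) ℝ) :
    frobInner (c • A) B = c * frobInner A B := by
  simp [frobInner, Matrix.smul_apply, smul_eq_mul, Finset.mul_sum, mul_assoc]

lemma fi_smul_right (c : ℝ) (A B : Matrix (Fin p) (Fin q) ℝ) :
    frobInner A (c • B) = c * frobInner A B := by
  rw [fi_comm, fi_smul_left, fi_comm]

lemma fi_sum_left {m : ℕ} (f : Fin m → Matrix (Fin p) (Fin q) ℝ) (B : Matrix (Fin p) (Fin q) ℝ) :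
    frobInner (∑ k, f k) B = ∑ k, frobInner (f k) B := by
  simp only [frobInner, Matrix.sum_apply, Finset.sum_mul]
  trans ∑ i, ∑ k, ∑ j, f k i j * B i j
  · exact Finset.sum_congr rfl fun i _ => Finset.sum_comm
  · exact Finset.sum_comm

lemma fi_trace (A B : Matrix (Fin p) (Fin q) ℝ) : frobInner A B = (Aᵀ * B).trace := by
  simp only [Matrix.trace, Matrix.diag, Matrix.mul_apply, Matrix.transpose_apply, frobInner]
  exact Finset.sum_comm

lemma fi_self_nonneg (A : Matrix (Fin p) (Fin q) ℝ) : 0 ≤ frobInner A A := by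
  apply Finset.sum_nonneg; intro i _; apply Finset.sum_nonneg; intro j _
  exact mul_self_nonneg _

lemma frobNorm_nonneg (A : Matrix (Fin p) (Fin q) ℝ) : 0 ≤ frobNorm A := Real.sqrt_nonneg _

lemma frobNorm_sq (A : Matrix (Fin p) (Fin q) ℝ) : frobNorm A ^ 2 = frobInner A A := by
  rw [frobNorm, Real.sq_sqrt]
  · simp [frobInner, pow_two]
  · positivity

lemma fi_key (X : Matrix (Fin p) (Fin q) ℝ) (Y : Matrix (Fin s) (Fin q) ℝ)
    (Z : Matrix (Fin p) (Fin t) ℝ) (W : Matrix (Fin s) (Fin t) ℝ) :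
    frobInner (X * Yᵀ) (Z * Wᵀ) = frobInner (Zᵀ * X) (Wᵀ * Y) := by
  rw [fi_trace, fi_trace, Matrix.transpose_mul, Matrix.transpose_transpose,
    Matrix.transpose_mul, Matrix.transpose_transpose]
  rw [show Y * Xᵀ * (Z * Wᵀ) = Y * (Xᵀ * Z * Wᵀ) by
    rw [Matrix.mul_assoc, Matrix.mul_assoc]]
  rw [Matrix.trace_mul_comm,
    show Xᵀ * Z * Wᵀ * Y = Xᵀ * Z * (Wᵀ * Y) from Matrix.mul_assoc _ _ _]

lemma fi_mul_right (Ak : Matrix (Fin p) (Fin p) ℝ) (U : Matrix (Fin p) (Fin q) ℝ)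
    (Δ : Matrix (Fin p) (Fin q) ℝ) :
    frobInner (Ak * U) Δ = frobInner Ak (Δ * Uᵀ) := by
  rw [fi_trace, fi_trace, Matrix.transpose_mul]
  rw [Matrix.mul_assoc, Matrix.trace_mul_comm, Matrix.mul_assoc]

lemma fi_transpose_right (Ak : Matrix (Fin p) (Fin p) ℝ) (hA : Ak.IsSymm)
    (X : Matrix (Fin p) (Fin p) ℝ) : frobInner Ak Xᵀ = frobInner Ak X := by
  rw [fi_trace, fi_trace]
  conv_lhs => rw [← hA]
  rw [← Matrix.transpose_mul, Matrix.trace_transpose, Matrix.trace_mul_comm]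

lemma rank_add_le' (A B : Matrix (Fin p) (Fin q) ℝ) : (A + B).rank ≤ A.rank + B.rank := by
  rw [Matrix.rank, Matrix.rank, Matrix.rank, Matrix.mulVecLin_add]
  have h : LinearMap.range (A.mulVecLin + B.mulVecLin) ≤
      LinearMap.range A.mulVecLin ⊔ LinearMap.range B.mulVecLin := by
    rintro x ⟨y, rfl⟩
    exact Submodule.mem_sup.2 ⟨_, ⟨y, rfl⟩, _, ⟨y, rfl⟩, rfl⟩
  exact (Submodule.finrank_mono h).trans (Submodule.finrank_add_le_finrank_add_finrank _ _)

lemma fi_cs (X Y : Matrix (Fin p) (Fin q) ℝ) : frobInner X Y ≤ frobNorm X * frobNorm Y := by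
  have h : (frobInner X Y) ^ 2 ≤ (∑ i, ∑ j, X i j ^ 2) * (∑ i, ∑ j, Y i j ^ 2) := by
    have h2 := Finset.sum_mul_sq_le_sq_mul_sq Finset.univ
      (fun pr : Fin p × Fin q => X pr.1 pr.2) (fun pr : Fin p × Fin q => Y pr.1 pr.2)
    rw [Fintype.sum_prod_type, Fintype.sum_prod_type, Fintype.sum_prod_type] at h2
    simpa [frobInner] using h2
  have h3 : frobInner X Y ≤ Real.sqrt ((∑ i, ∑ j, X i j ^ 2) * (∑ i, ∑ j, Y i j ^ 2)) := by
    calc frobInner X Y ≤ |frobInner X Y| := le_abs_self _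
    _ = Real.sqrt ((frobInner X Y) ^ 2) := (Real.sqrt_sq_eq_abs _).symm
    _ ≤ _ := Real.sqrt_le_sqrt h
  rwa [Real.sqrt_mul (by positivity)] at h3

end aux

lemma fi_expand {p q : ℕ} (X Y Z W : Matrix (Fin p) (Fin q) ℝ) :
    frobInner (X + Y) (Z + W) =
      frobInner X Z + frobInner X W + frobInner Y Z + frobInner Y W := by
  rw [fi_add_left, fi_add_right, fi_add_right]; ring

set_option maxHeartbeats 2000000 in
theorem stmt15 {m n r : ℕ} (hm : 0 < m) (δ lam : ℝ)
    (hδ0 : 0 < δ) (hδ : δ < 1 / 10) (hlam : 0 < lam)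
    (A : Fin m → Matrix (Fin n) (Fin n) ℝ)
    (hAsymm : ∀ k, (A k).IsSymm)
    (hRIP : ∀ X : Matrix (Fin n) (Fin n) ℝ, X.rank ≤ 2 * r →
      (1 - δ) * frobNorm X ^ 2 ≤ (1 / (m : ℝ)) * ∑ k, (frobInner (A k) X) ^ 2 ∧
      (1 / (m : ℝ)) * ∑ k, (frobInner (A k) X) ^ 2 ≤ (1 + δ) * frobNorm X ^ 2)
    (Uhat Δ : Matrix (Fin n) (Fin r) ℝ)
    (hsym : Δᵀ * Uhat = Uhatᵀ * Δ)
    (hsmin : ∀ x : Fin r → ℝ, lam * (∑ i, x i ^ 2) ≤ ∑ i, (Uhat.mulVec x i) ^ 2)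
    (hΔ : frobNorm Δ ≤ Real.sqrt lam / 3) :
    lam / 2 * frobNorm Δ ^ 2 ≤
        frobInner ((1 / (m : ℝ)) •
          ∑ k, (frobInner (A k)
              ((Uhat + Δ) * (Uhat + Δ)ᵀ - Uhat * Uhatᵀ)) • (A k * (Uhat + Δ))) Δ ∧
      frobNorm Δ ≤ 2 / lam *
        frobNorm ((1 / (m : ℝ)) •
          ∑ k, (frobInner (A k)
              ((Uhat + Δ) * (Uhat + Δ)ᵀ - Uhat * Uhatᵀ)) • (A k * (Uhat + Δ))) := by
  set U : Matrix (Fin n) (Fin r) ℝ := Uhat + Δ with hUdef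
  set E : Matrix (Fin n) (Fin n) ℝ := U * Uᵀ - Uhat * Uhatᵀ with hEdef
  clear_value U
  clear_value E
  set S : Matrix (Fin n) (Fin n) ℝ := Uhat * Δᵀ + Δ * Uhatᵀ with hSdef
  set D : Matrix (Fin n) (Fin n) ℝ := Δ * Δᵀ with hDdef
  set F : Matrix (Fin n) (Fin n) ℝ := U * Δᵀ + Δ * Uᵀ with hFdef
  clear_value S D F
  -- basic scalar quantities
  set t : ℝ := frobInner Δ Δ with htdef
  set kn : ℝ := frobInner (Uhatᵀ * Uhat) (Δᵀ * Δ) with hkndef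
  set m2 : ℝ := frobInner (Uhatᵀ * Δ) (Uhatᵀ * Δ) with hm2def
  set mn : ℝ := frobInner (Uhatᵀ * Δ) (Δᵀ * Δ) with hmndef
  set n2 : ℝ := frobInner (Δᵀ * Δ) (Δᵀ * Δ) with hn2def
  clear_value t kn m2 mn n2
  -- matrix identities
  have hESD : E = S + D := by
    rw [hEdef, hSdef, hDdef, hUdef]
    simp only [Matrix.transpose_add, Matrix.mul_add, Matrix.add_mul]
    abel
  have hFSD : F = S + (D + D) := by
    rw [hFdef, hSdef, hDdef, hUdef]
    simp only [Matrix.transpose_add, Matrix.mul_add, Matrix.add_mul]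
    abel
  -- elementary inner product values
  have e1 : frobInner (Uhat * Δᵀ) (Uhat * Δᵀ) = kn := by
    rw [hkndef]; exact fi_key Uhat Δ Uhat Δ
  have e2 : frobInner (Uhat * Δᵀ) (Δ * Uhatᵀ) = m2 := by
    rw [hm2def, fi_key Uhat Δ Δ Uhat, hsym]
  have e3 : frobInner (Δ * Uhatᵀ) (Uhat * Δᵀ) = m2 := by
    rw [hm2def, fi_key Δ Uhat Uhat Δ, hsym]
  have e4 : frobInner (Δ * Uhatᵀ) (Δ * Uhatᵀ) = kn := by
    rw [hkndef, fi_key Δ Uhat Δ Uhat, fi_comm]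
  have e5 : frobInner (Uhat * Δᵀ) (Δ * Δᵀ) = mn := by
    rw [hmndef, fi_key Uhat Δ Δ Δ, hsym]
  have e6 : frobInner (Δ * Uhatᵀ) (Δ * Δᵀ) = mn := by
    rw [hmndef, fi_key Δ Uhat Δ Δ, hsym, fi_comm]
  have e5' : frobInner (Δ * Δᵀ) (Uhat * Δᵀ) = mn := by
    rw [hmndef, fi_key Δ Δ Uhat Δ]
  have e6' : frobInner (Δ * Δᵀ) (Δ * Uhatᵀ) = mn := by
    rw [hmndef, fi_key Δ Δ Δ Uhat, fi_comm]
  have e7 : frobInner (Δ * Δᵀ) (Δ * Δᵀ) = n2 := by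
    rw [hn2def]; exact fi_key Δ Δ Δ Δ
  -- inner products between S and D
  have hSS : frobInner S S = 2 * kn + 2 * m2 := by
    rw [hSdef, fi_expand, e1, e2, e3, e4]; ring
  have hSD : frobInner S D = 2 * mn := by
    rw [hSdef, hDdef, fi_add_left, e5, e6]; ring
  have hDS : frobInner D S = 2 * mn := by
    rw [hSdef, hDdef, fi_add_right, e5', e6']; ring
  have hDD : frobInner D D = n2 := by rw [hDdef, e7]
  -- norms of E, F, S
  have hnS : frobNorm S ^ 2 = 2 * kn + 2 * m2 := by rw [frobNorm_sq, hSS]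
  have hnE : frobNorm E ^ 2 = 2 * kn + 2 * m2 + 4 * mn + n2 := by
    rw [frobNorm_sq, hESD, fi_expand, hSS, hSD, hDS, hDD]; ring
  have hnF : frobNorm F ^ 2 = 2 * kn + 2 * m2 + 8 * mn + 4 * n2 := by
    have h1 : frobInner S (D + D) = 4 * mn := by rw [fi_add_right, hSD]; ring
    have h2 : frobInner (D + D) S = 4 * mn := by rw [fi_add_left, hDS]; ring
    have h3 : frobInner (D + D) (D + D) = 4 * n2 := by rw [fi_expand, hDD]; ring
    rw [frobNorm_sq, hFSD, fi_expand, hSS, h1, h2, h3]; ring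
  -- rank bounds
  have hrank : ∀ (X Y : Matrix (Fin n) (Fin r) ℝ), (X * Yᵀ + Y * Xᵀ).rank ≤ 2 * r := by
    intro X Y
    refine (rank_add_le' _ _).trans ?_
    have h1 : (X * Yᵀ).rank ≤ r :=
      (Matrix.rank_mul_le_left X Yᵀ).trans (Matrix.rank_le_width X)
    have h2 : (Y * Xᵀ).rank ≤ r :=
      (Matrix.rank_mul_le_left Y Xᵀ).trans (Matrix.rank_le_width Y)
    omega
  have hrS : S.rank ≤ 2 * r := by rw [hSdef]; exact hrank Uhat Δ
  have hrF : F.rank ≤ 2 * r := by rw [hFdef]; exact hrank U Δ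
  have hrE : E.rank ≤ 2 * r := by
    have hEalt : E = U * Δᵀ + Δ * Uhatᵀ := by
      rw [hEdef, hUdef]
      simp only [Matrix.transpose_add, Matrix.mul_add, Matrix.add_mul]
      abel
    rw [hEalt]
    refine (rank_add_le' _ _).trans ?_
    have h1 : (U * Δᵀ).rank ≤ r :=
      (Matrix.rank_mul_le_left U Δᵀ).trans (Matrix.rank_le_width U)
    have h2 : (Δ * Uhatᵀ).rank ≤ r :=
      (Matrix.rank_mul_le_left Δ Uhatᵀ).trans (Matrix.rank_le_width Δ)
    omega
  -- RIP instances
  obtain ⟨hE1, -⟩ := hRIP E hrE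
  obtain ⟨hF1, -⟩ := hRIP F hrF
  obtain ⟨-, hS2⟩ := hRIP S hrS
  set qE : ℝ := (1 / (m : ℝ)) * ∑ k, (frobInner (A k) E) ^ 2 with hqEdef
  set qF : ℝ := (1 / (m : ℝ)) * ∑ k, (frobInner (A k) F) ^ 2 with hqFdef
  set qS : ℝ := (1 / (m : ℝ)) * ∑ k, (frobInner (A k) S) ^ 2 with hqSdef
  rw [hnE] at hE1; rw [hnF] at hF1; rw [hnS] at hS2
  -- the gradient inner product
  have key1 : frobInner ((1 / (m : ℝ)) • ∑ k, (frobInner (A k) E) • (A k * U)) Δ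
      = 1 / 2 * qE + 1 / 8 * qF - 1 / 8 * qS := by
    rw [fi_smul_left, fi_sum_left]
    have hterm : ∀ k, frobInner ((frobInner (A k) E) • (A k * U)) Δ
        = 1 / 2 * (frobInner (A k) E) ^ 2 + 1 / 8 * (frobInner (A k) F) ^ 2
          - 1 / 8 * (frobInner (A k) S) ^ 2 := by
      intro k
      rw [fi_smul_left, fi_mul_right]
      have hUΔ : frobInner (A k) (U * Δᵀ) = frobInner (A k) (Δ * Uᵀ) := by
        rw [show U * Δᵀ = (Δ * Uᵀ)ᵀ by rw [Matrix.transpose_mul, Matrix.transpose_transpose]]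
        exact fi_transpose_right _ (hAsymm k) _
      have hf : frobInner (A k) F = 2 * frobInner (A k) (Δ * Uᵀ) := by
        rw [hFdef, fi_add_right, hUΔ]; ring
      have he : frobInner (A k) E = frobInner (A k) S + frobInner (A k) D := by
        rw [hESD, fi_add_right]
      have hf2 : frobInner (A k) F
          = frobInner (A k) S + 2 * frobInner (A k) D := by
        rw [hFSD, fi_add_right, fi_add_right]; ring
      have hd : frobInner (A k) (Δ * Uᵀ) = frobInner (A k) F / 2 := by rw [hf]; ring
      rw [hd, he, hf2]
      ring
    rw [Finset.sum_congr rfl fun k _ => hterm k]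
    rw [Finset.sum_sub_distrib, Finset.sum_add_distrib, ← Finset.mul_sum, ← Finset.mul_sum,
      ← Finset.mul_sum, hqEdef, hqFdef, hqSdef]
    ring
  -- smallest singular value bound : lam * t ≤ kn
  have hkn : lam * t ≤ kn := by
    have hknalt : kn = ∑ j, ∑ i, (Uhat.mulVec (Δ j) i) ^ 2 := by
      rw [hkndef, ← fi_key Uhat Δ Uhat Δ]
      simp only [frobInner, Matrix.mul_apply, Matrix.transpose_apply, Matrix.mulVec,
        dotProduct, ← pow_two]
      exact Finset.sum_comm
    have htalt : t = ∑ j, ∑ a, (Δ j a) ^ 2 := by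
      rw [htdef]; simp only [frobInner, ← pow_two]
    rw [hknalt, htalt, Finset.mul_sum]
    exact Finset.sum_le_sum fun j _ => hsmin (Δ j)
  -- t bounds
  have ht0 : 0 ≤ t := by rw [htdef]; exact fi_self_nonneg Δ
  have ht9 : t ≤ lam / 9 := by
    have h1 : frobNorm Δ ^ 2 ≤ (Real.sqrt lam / 3) ^ 2 :=
      pow_le_pow_left₀ (frobNorm_nonneg Δ) hΔ 2
    rw [frobNorm_sq] at h1
    rw [div_pow, Real.sq_sqrt hlam.le] at h1
    rw [htdef]; linarith
  have hm2 : 0 ≤ m2 := by rw [hm2def]; exact fi_self_nonneg _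
  have hn2 : 0 ≤ n2 := by rw [hn2def]; exact fi_self_nonneg _
  -- n2 ≤ t^2
  have hn2t : n2 ≤ t ^ 2 := by
    have hg : ∀ a b : Fin r, ((Δᵀ * Δ) a b) ^ 2
        ≤ (∑ i, Δ i a ^ 2) * (∑ i, Δ i b ^ 2) := by
      intro a b
      have h := Finset.sum_mul_sq_le_sq_mul_sq Finset.univ (fun i => Δ i a) (fun i => Δ i b)
      simpa [Matrix.mul_apply, Matrix.transpose_apply] using h
    have h1 : n2 ≤ ∑ a, ∑ b, (∑ i, Δ i a ^ 2) * (∑ i, Δ i b ^ 2) := by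
      rw [hn2def]
      simp only [frobInner, ← pow_two]
      exact Finset.sum_le_sum fun a _ => Finset.sum_le_sum fun b _ => hg a b
    have h2 : ∑ a : Fin r, ∑ b : Fin r, (∑ i, Δ i a ^ 2) * (∑ i, Δ i b ^ 2)
        = (∑ a : Fin r, ∑ i, Δ i a ^ 2) * (∑ b : Fin r, ∑ i, Δ i b ^ 2) := by
      rw [Finset.sum_mul_sum]
    have h3 : t = ∑ a : Fin r, ∑ i, Δ i a ^ 2 := by
      rw [htdef]; simp only [frobInner, ← pow_two]; exact Finset.sum_comm
    rw [h3, pow_two]; rw [h2] at h1; exact h1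
  -- Cauchy-Schwarz square trick
  have hsq : 0 ≤ m2 + 2 * (8/5) * mn + (8/5 : ℝ) ^ 2 * n2 := by
    have h := fi_self_nonneg (Uhatᵀ * Δ + (8/5 : ℝ) • (Δᵀ * Δ))
    rw [fi_expand, fi_smul_left, fi_smul_left, fi_smul_right, fi_smul_right,
      fi_comm (Δᵀ * Δ) (Uhatᵀ * Δ), ← hm2def, ← hmndef, ← hn2def] at h
    linarith [h]
  -- main scalar inequality
  have main1 : lam / 2 * t ≤ 1 / 2 * qE + 1 / 8 * qF - 1 / 8 * qS := by
    have hsq' : (0:ℝ) ≤ m2 + 16/5 * mn + 64/25 * n2 := by linarith [hsq]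
    have hn2lam : n2 ≤ lam / 9 * t := by
      have htt : t * t ≤ (lam / 9) * t := mul_le_mul_of_nonneg_right ht9 ht0
      linarith [hn2t, htt]
    have step1 : (1 - 3/2*δ) * kn + (1 - 3/2*δ) * m2 + 3*(1-δ) * mn + (1-δ) * n2
        ≤ 1 / 2 * qE + 1 / 8 * qF - 1 / 8 * qS := by linarith [hE1, hF1, hS2]
    have step2 : (0:ℝ) ≤ (15/16 * (1-δ)) * (m2 + 16/5 * mn + 64/25 * n2) :=
      mul_nonneg (by linarith) hsq'
    have step3 : (1 - 3/2*δ) * (lam * t) ≤ (1 - 3/2*δ) * kn :=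
      mul_le_mul_of_nonneg_left hkn (by linarith)
    have hm2d : (0:ℝ) ≤ (1/16 - 9/16*δ) * m2 := mul_nonneg (by linarith) hm2
    have hdn2 : (0:ℝ) ≤ δ * n2 := mul_nonneg hδ0.le hn2
    have hdlt : δ * (lam * t) ≤ 1/10 * (lam * t) :=
      mul_le_mul_of_nonneg_right hδ.le (mul_nonneg hlam.le ht0)
    linarith [step1, step2, step3, hm2d, hdn2, hdlt, hn2lam, mul_nonneg hlam.le ht0]
  have goal1 : lam / 2 * frobNorm Δ ^ 2
      ≤ frobInner ((1 / (m : ℝ)) • ∑ k, (frobInner (A k) E) • (A k * U)) Δ := by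
    rw [key1, frobNorm_sq, ← htdef]
    exact main1
  refine ⟨goal1, ?_⟩
  -- part 2 : Cauchy-Schwarz
  set G : Matrix (Fin n) (Fin r) ℝ :=
    (1 / (m : ℝ)) • ∑ k, (frobInner (A k) E) • (A k * U) with hGdef
  clear_value G
  have hcs : frobInner G Δ ≤ frobNorm G * frobNorm Δ := fi_cs G Δ
  by_cases hz : frobNorm Δ = 0
  · rw [hz]
    have := frobNorm_nonneg G
    positivity
  · have hpos : 0 < frobNorm Δ := lt_of_le_of_ne (frobNorm_nonneg Δ) (Ne.symm hz)
    have h1 : lam / 2 * frobNorm Δ ^ 2 ≤ frobNorm G * frobNorm Δ := by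
      calc lam / 2 * frobNorm Δ ^ 2 ≤ frobInner G Δ := goal1
      _ ≤ frobNorm G * frobNorm Δ := hcs
    have h3 : lam / 2 * frobNorm Δ ≤ frobNorm G := by
      have h1' : (lam / 2 * frobNorm Δ) * frobNorm Δ ≤ frobNorm G * frobNorm Δ := by
        calc (lam / 2 * frobNorm Δ) * frobNorm Δ = lam / 2 * frobNorm Δ ^ 2 := by ring
        _ ≤ frobNorm G * frobNorm Δ := h1
      exact le_of_mul_le_mul_right h1' hpos
    rw [div_mul_eq_mul_div, le_div_iff₀ hlam]
    linarith [h3]
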